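/- arXiv:1204.0166 — 2 statements merged into one kernel-verified Lean document; each statement's English description precedes it below -/
import Mathlib

section
/- Let Q be a Hermitian n×n matrix, h̄ ∈ ℂ^n, r > 0. Then the minimum of (h̄+e)^H Q (h̄+e) over ‖e‖² ≤ r² equals the minimum of tr(Q [I, h̄] V [I, h̄]^H) over Hermitian PSD (n+1)×(n+1) matrices V with tr(V) ≤ 1 + r² and last diagonal entry [V]_{n+1,n+1} = 1. In particular the semidefinite relaxation of the inner minimization is tight. -/
open scoped ComplexOrder
open Matrix

/-- The `n × (n+1)` matrix `[I, h̄]` (identity augmented by the column `h̄`). -/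
noncomputable def appendCol {n : ℕ} (hbar : Fin n → ℂ) :
    Matrix (Fin n) (Fin n ⊕ Fin 1) ℂ :=
  Matrix.fromCols 1 (Matrix.replicateCol (Fin 1) hbar)

/-! Every feasible `e` gives the feasible rank-one matrix `V = (e, 1)(e, 1)ᴴ` with the same value.
Conversely a feasible `V` is `[[X, v], [vᴴ, 1]]`, whose Schur complement `M = X - vvᴴ` is positive
semidefinite; with `f(y) = yᴴQy` its value is `f(h̄ + v) + tr(QM)`, while `‖v‖² + tr M ≤ r²`.
Writing `M = ∑ₖ wₖwₖᴴ`, some `wₖ` has Rayleigh quotient at most the average `tr(QM) / tr M`;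
rescaled, it is a `w` with `‖w‖² = tr M` and `wᴴQw ≤ tr(QM)`. A unimodular phase `ω` makes `v`
and `ωw` orthogonal in real part and the cross term of `f(h̄ + v + ωw)` nonpositive, so
`e = v + ωw` is feasible with value at most that of `V`. -/

lemma Complex.exists_norm_eq_one_re_mul_eq_zero_re_mul_nonpos (α β : ℂ) :
    ∃ ω : ℂ, ‖ω‖ = 1 ∧ (ω * α).re = 0 ∧ (ω * β).re ≤ 0 := by
  set ω₀ := I * exp (-arg α * I)
  have hω₀ : ‖ω₀‖ = 1 := by
    rw [norm_mul, norm_I, one_mul, ← ofReal_neg, norm_exp_ofReal_mul_I]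
  have hω₀α : (ω₀ * α).re = 0 := by
    conv_lhs => rw [← norm_mul_exp_arg_mul_I α]
    rw [show ω₀ * (‖α‖ * exp (arg α * I)) = ‖α‖ * I * (exp (-arg α * I) * exp (arg α * I)) by ring,
      ← exp_add, neg_mul, neg_add_cancel, exp_zero, mul_one]
    simp
  rcases le_total (ω₀ * β).re 0 with h | h
  · exact ⟨ω₀, hω₀, hω₀α, h⟩
  · exact ⟨-ω₀, by rwa [norm_neg], by simp [hω₀α], by simpa using h⟩

namespace Matrix

section QuadraticForm

variable {m : Type*} [Fintype m]

lemma trace_mul_vecMulVec_star (Q : Matrix m m ℂ) (x : m → ℂ) :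
    (Q * vecMulVec x (star x)).trace = star x ⬝ᵥ Q *ᵥ x := by
  rw [mul_vecMulVec, trace_vecMulVec, dotProduct_comm]

lemma re_star_dotProduct_self (x : m → ℂ) :
    (star x ⬝ᵥ x).re = ∑ i, Complex.normSq (x i) := by
  simp [dotProduct, Complex.re_sum, Complex.normSq_apply]

lemma star_smul_dotProduct_mulVec_smul (Q : Matrix m m ℂ) (c : ℂ) (x : m → ℂ) :
    star (c • x) ⬝ᵥ Q *ᵥ (c • x) = Complex.normSq c * (star x ⬝ᵥ Q *ᵥ x) := by
  rw [star_smul, mulVec_smul, smul_dotProduct, dotProduct_smul, smul_smul, smul_eq_mul,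
    Complex.normSq_eq_conj_mul_self]
  rfl

lemma IsHermitian.re_star_add_smul_dotProduct_mulVec {Q : Matrix m m ℂ} (hQ : Q.IsHermitian)
    (x y : m → ℂ) {c : ℂ} (hc : ‖c‖ = 1) :
    (star (x + c • y) ⬝ᵥ Q *ᵥ (x + c • y)).re =
      (star x ⬝ᵥ Q *ᵥ x).re + 2 * (c * (star x ⬝ᵥ Q *ᵥ y)).re + (star y ⬝ᵥ Q *ᵥ y).re := by
  have hcross : star y ⬝ᵥ Q *ᵥ x = star (star x ⬝ᵥ Q *ᵥ y) := by
    rw [star_dotProduct x, star_star, star_mulVec, hQ.eq, ← dotProduct_mulVec]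
  have hc' : Complex.normSq c = 1 := by rw [Complex.normSq_eq_norm_sq, hc, one_pow]
  rw [star_add, mulVec_add, add_dotProduct, dotProduct_add, dotProduct_add,
    star_smul_dotProduct_mulVec_smul, hc', star_smul, smul_dotProduct, hcross, mulVec_smul,
    dotProduct_smul]
  simp only [Complex.add_re, Complex.star_def, smul_eq_mul, Complex.ofReal_one, one_mul]
  rw [← map_mul, Complex.conj_re]
  ring

lemma PosSemidef.exists_re_star_dotProduct_self_eq_trace_and_le {M : Matrix m m ℂ}
    (hM : M.PosSemidef) (Q : Matrix m m ℂ) :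
    ∃ w : m → ℂ, (star w ⬝ᵥ w).re = M.trace.re ∧
      (star w ⬝ᵥ Q *ᵥ w).re ≤ (Q * M).trace.re := by
  classical
  obtain ⟨K, w, rfl⟩ := posSemidef_iff_eq_sum_vecMulVec.mp hM
  simp only [Matrix.mul_sum, trace_sum, trace_mul_vecMulVec_star, trace_vecMulVec,
    dotProduct_comm _ (star _), Complex.re_sum]
  set S := ∑ k, (star (w k) ⬝ᵥ w k).re
  set T := ∑ k, (star (w k) ⬝ᵥ Q *ᵥ w k).re
  by_cases hw : ∀ k, w k = 0
  · exact ⟨0, by simp [S, T, hw]⟩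
  obtain ⟨k₀, hk₀⟩ := not_forall.mp hw
  obtain ⟨k, hk, hle⟩ : ∃ k ∈ Finset.univ.filter (w · ≠ 0),
      (star (w k) ⬝ᵥ Q *ᵥ w k).re * S ≤ T * (star (w k) ⬝ᵥ w k).re := by
    refine Finset.exists_le_of_sum_le ⟨k₀, by simpa using hk₀⟩ (le_of_eq ?_)
    rw [← Finset.sum_mul, ← Finset.mul_sum, Finset.sum_filter_of_ne, Finset.sum_filter_of_ne,
      mul_comm] <;> intro k _ hk <;> contrapose! hk <;> simp [hk]
  have hk : 0 < (star (w k) ⬝ᵥ w k).re :=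
    (Complex.pos_iff.mp (dotProduct_star_self_pos_iff.mpr (by simpa using hk))).1
  have hS : 0 ≤ S := Finset.sum_nonneg fun k _ =>
    (Complex.nonneg_iff.mp (dotProduct_star_self_nonneg (w k))).1
  set t := √(S / (star (w k) ⬝ᵥ w k).re)
  have hscale (A : Matrix m m ℂ) : (star ((t : ℂ) • w k) ⬝ᵥ A *ᵥ ((t : ℂ) • w k)).re =
      S / (star (w k) ⬝ᵥ w k).re * (star (w k) ⬝ᵥ A *ᵥ w k).re := by
    rw [star_smul_dotProduct_mulVec_smul, Complex.normSq_ofReal, ← sq,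
      Real.sq_sqrt (div_nonneg hS hk.le), Complex.re_ofReal_mul]
  refine ⟨(t : ℂ) • w k, ?_, ?_⟩
  · simpa [hk.ne'] using hscale 1
  · rw [hscale, div_mul_eq_mul_div, div_le_iff₀ hk]
    linarith

lemma PosSemidef.exists_shift_re_star_dotProduct_eq_and_le {M : Matrix m m ℂ}
    (hM : M.PosSemidef) {Q : Matrix m m ℂ} (hQ : Q.IsHermitian) (a b : m → ℂ) :
    ∃ u : m → ℂ, (star (a + u) ⬝ᵥ (a + u)).re = (star a ⬝ᵥ a).re + M.trace.re ∧
      (star (b + u) ⬝ᵥ Q *ᵥ (b + u)).re ≤ (star b ⬝ᵥ Q *ᵥ b).re + (Q * M).trace.re := by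
  classical
  obtain ⟨w, hw_norm, hw_quad⟩ := hM.exists_re_star_dotProduct_self_eq_trace_and_le Q
  obtain ⟨ω, hω, hωa, hωb⟩ :=
    Complex.exists_norm_eq_one_re_mul_eq_zero_re_mul_nonpos (star a ⬝ᵥ w) (star b ⬝ᵥ Q *ᵥ w)
  refine ⟨ω • w, ?_, ?_⟩
  · simpa only [one_mulVec, hωa, hw_norm, mul_zero, add_zero] using
      isHermitian_one.re_star_add_smul_dotProduct_mulVec a w hω
  · rw [hQ.re_star_add_smul_dotProduct_mulVec b w hω]
    linarith

end QuadraticForm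

section Bordered

variable {m : Type*}

lemma replicateCol_mul_replicateRow_fin_one {n : Type*} (a : m → ℂ) (b : n → ℂ) :
    replicateCol (Fin 1) a * replicateRow (Fin 1) b = vecMulVec a b := by
  ext
  simp [mul_apply, vecMulVec]

def bordered (X : Matrix m m ℂ) (v : m → ℂ) : Matrix (m ⊕ Fin 1) (m ⊕ Fin 1) ℂ :=
  fromBlocks X (replicateCol (Fin 1) v) (replicateRow (Fin 1) (star v)) 1

@[simp]
lemma bordered_inr_inr (X : Matrix m m ℂ) (v : m → ℂ) : bordered X v (.inr 0) (.inr 0) = 1 := rfl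

lemma IsHermitian.exists_eq_bordered {V : Matrix (m ⊕ Fin 1) (m ⊕ Fin 1) ℂ} (hV : V.IsHermitian)
    (hc : V (.inr 0) (.inr 0) = 1) : ∃ X v, V = bordered X v := by
  refine ⟨V.toBlocks₁₁, fun i => V (.inl i) (.inr 0), ?_⟩
  conv_lhs => rw [← fromBlocks_toBlocks V]
  unfold bordered
  congr 1
  · ext i j; fin_cases j; rfl
  · ext i j; fin_cases i; exact (hV.apply (.inr 0) (.inl j)).symm
  · ext i j; fin_cases i; fin_cases j; exact hc

variable [Fintype m]

lemma trace_bordered (X : Matrix m m ℂ) (v : m → ℂ) : (bordered X v).trace = X.trace + 1 := by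
  simp [bordered, trace, Fintype.sum_sum_type]

lemma posSemidef_bordered_iff [DecidableEq m] {X : Matrix m m ℂ} {v : m → ℂ} :
    (bordered X v).PosSemidef ↔ (X - vecMulVec v (star v)).PosSemidef := by
  let _ : Invertible (1 : Matrix (Fin 1) (Fin 1) ℂ) := invertibleOne
  rw [bordered, ← conjTranspose_replicateCol, PosDef.fromBlocks₂₂ _ _ PosDef.one, inv_one,
    Matrix.mul_one, conjTranspose_replicateCol, replicateCol_mul_replicateRow_fin_one]

end Bordered

end Matrix

lemma appendCol_mul_bordered_mul_conjTranspose {n : ℕ} (hbar : Fin n → ℂ)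
    (X : Matrix (Fin n) (Fin n) ℂ) (v : Fin n → ℂ) :
    appendCol hbar * bordered X v * (appendCol hbar)ᴴ =
      (X - vecMulVec v (star v)) + vecMulVec (hbar + v) (star (hbar + v)) := by
  rw [appendCol, bordered, fromCols_mul_fromBlocks,
    conjTranspose_fromCols_eq_fromRows_conjTranspose, fromCols_mul_fromRows, conjTranspose_one,
    conjTranspose_replicateCol]
  simp only [Matrix.one_mul, Matrix.mul_one, ← replicateCol_add,
    replicateCol_mul_replicateRow_fin_one, star_add, vecMulVec_add, add_vecMulVec]
  abel

theorem sdr_tight_ball_quadratic_min_general (n : ℕ) (Q : Matrix (Fin n) (Fin n) ℂ)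
    (hQ : Q.IsHermitian) (hbar : Fin n → ℂ) (r : ℝ) :
    sInf {x : ℝ | ∃ e : Fin n → ℂ, ∑ i, Complex.normSq (e i) ≤ r ^ 2 ∧
        x = (star (hbar + e) ⬝ᵥ Q *ᵥ (hbar + e)).re}
    = sInf {x : ℝ | ∃ V : Matrix (Fin n ⊕ Fin 1) (Fin n ⊕ Fin 1) ℂ,
        V.PosSemidef ∧ V.trace.re ≤ 1 + r ^ 2 ∧
        V (Sum.inr 0) (Sum.inr 0) = 1 ∧
        x = ((Q * (appendCol hbar * V * (appendCol hbar)ᴴ)).trace).re} := by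
  apply csInf_eq_csInf_of_forall_exists_le
  · rintro _ ⟨e, he, rfl⟩
    refine ⟨_, ⟨bordered (vecMulVec e (star e)) e, ?_, ?_, bordered_inr_inr _ _, rfl⟩, le_of_eq ?_⟩
    · rw [posSemidef_bordered_iff, sub_self]
      exact .zero
    · rw [trace_bordered, trace_vecMulVec, dotProduct_comm, Complex.add_re, re_star_dotProduct_self,
        Complex.one_re]
      linarith
    · rw [appendCol_mul_bordered_mul_conjTranspose, sub_self, zero_add, trace_mul_vecMulVec_star]
  · rintro _ ⟨V, hV, htr, hc, rfl⟩
    obtain ⟨X, v, rfl⟩ := hV.isHermitian.exists_eq_bordered hc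
    obtain ⟨u, hnorm, hval⟩ :=
      (posSemidef_bordered_iff.mp hV).exists_shift_re_star_dotProduct_eq_and_le hQ v (hbar + v)
    refine ⟨_, ⟨v + u, ?_, rfl⟩, ?_⟩
    · rw [trace_bordered, Complex.add_re, Complex.one_re] at htr
      rw [← re_star_dotProduct_self, hnorm, trace_sub, trace_vecMulVec, dotProduct_comm,
        Complex.sub_re]
      linarith
    · rw [appendCol_mul_bordered_mul_conjTranspose, Matrix.mul_add, trace_add, Complex.add_re,
        trace_mul_vecMulVec_star, ← add_assoc]
      linarith

/-- Tightness of the SDR of the ball-constrained quadratic minimization: the minimum of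
`(h̄+e)ᴴ Q (h̄+e)` over `‖e‖² ≤ r²` equals the minimum of `tr(Q [I,h̄] V [I,h̄]ᴴ)` over
Hermitian PSD `V` with `tr(V) ≤ 1 + r²` and last diagonal entry `1`. -/
theorem sdr_tight_ball_quadratic_min (n : ℕ) (Q : Matrix (Fin n) (Fin n) ℂ)
    (hQ : Q.IsHermitian) (hbar : Fin n → ℂ) (r : ℝ) (hr : 0 < r) :
    sInf {x : ℝ | ∃ e : Fin n → ℂ, ∑ i, Complex.normSq (e i) ≤ r ^ 2 ∧
        x = (star (hbar + e) ⬝ᵥ Q *ᵥ (hbar + e)).re}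
    = sInf {x : ℝ | ∃ V : Matrix (Fin n ⊕ Fin 1) (Fin n ⊕ Fin 1) ℂ,
        V.PosSemidef ∧ V.trace.re ≤ 1 + r ^ 2 ∧
        V (Sum.inr 0) (Sum.inr 0) = 1 ∧
        x = ((Q * (appendCol hbar * V * (appendCol hbar)ᴴ)).trace).re} :=
  sdr_tight_ball_quadratic_min_general n Q hQ hbar r
end

section
/- Complementary slackness consequence: under the additional hypothesis tr(A) = (1+r²)[A]_{n+1,n+1} (active trace constraint) or λ = 0, the identity of the previous statement simplifies to tr(Q [I,h̄] A [I,h̄]^H) = σ² [A]_{n+1,n+1}. -/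
open scoped ComplexOrder
open Matrix

/-- `Ψ = [I; h̄ᴴ] Q [I, h̄] + diag(λ I, −σ² − λ r²)`. -/
noncomputable def PsiMat {n : ℕ} (Q : Matrix (Fin n) (Fin n) ℂ) (hbar : Fin n → ℂ)
    (l σ2 r : ℝ) : Matrix (Fin n ⊕ Fin 1) (Fin n ⊕ Fin 1) ℂ :=
  (appendCol hbar)ᴴ * Q * appendCol hbar +
    Matrix.fromBlocks ((l : ℂ) • (1 : Matrix (Fin n) (Fin n) ℂ)) 0 0
      (Matrix.of fun _ _ : Fin 1 => (-(σ2 : ℂ) - (l : ℂ) * (r : ℂ) ^ 2))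

/-!
`ΨA = 0` forces `tr(ΨA) = 0`. Cycling the trace and splitting `A` into blocks turns this into
`tr(Q [I,h̄] A [I,h̄]ᴴ) = σ² a + λ((1+r²) a − tr A)` with `a = [A]_{n+1,n+1}`, and complementary
slackness makes the real part of the last summand vanish.
-/

namespace Matrix

variable {m n R : Type*} [Fintype m] [Fintype n]

theorem trace_fromBlocks [AddCommMonoid R] (A : Matrix m m R) (B : Matrix m n R)
    (C : Matrix n m R) (D : Matrix n n R) :
    (fromBlocks A B C D).trace = A.trace + D.trace :=
  Fintype.sum_sum_type _

theorem trace_eq_trace_toBlocks₁₁_add_trace_toBlocks₂₂ [AddCommMonoid R]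
    (A : Matrix (m ⊕ n) (m ⊕ n) R) :
    A.trace = A.toBlocks₁₁.trace + A.toBlocks₂₂.trace := by
  rw [← trace_fromBlocks _ A.toBlocks₁₂ A.toBlocks₂₁, fromBlocks_toBlocks]

theorem trace_fromBlocks_zero₁₂_zero₂₁_mul [NonUnitalNonAssocSemiring R] (P : Matrix m m R)
    (S : Matrix n n R) (A : Matrix (m ⊕ n) (m ⊕ n) R) :
    (fromBlocks P 0 0 S * A).trace = (P * A.toBlocks₁₁).trace + (S * A.toBlocks₂₂).trace := by
  conv_lhs => rw [← fromBlocks_toBlocks A, fromBlocks_multiply]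
  simp only [trace_fromBlocks, Matrix.zero_mul, add_zero, zero_add]

end Matrix

theorem trace_PsiMat_mul {n : ℕ} (Q : Matrix (Fin n) (Fin n) ℂ) (hbar : Fin n → ℂ)
    (l σ2 r : ℝ) (A : Matrix (Fin n ⊕ Fin 1) (Fin n ⊕ Fin 1) ℂ) :
    (PsiMat Q hbar l σ2 r * A).trace =
      (Q * (appendCol hbar * A * (appendCol hbar)ᴴ)).trace - σ2 * A (.inr 0) (.inr 0)
        - l * ((1 + r ^ 2) * A (.inr 0) (.inr 0) - A.trace) := by
  have hcycle : ((appendCol hbar)ᴴ * Q * appendCol hbar * A).trace =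
      (Q * (appendCol hbar * A * (appendCol hbar)ᴴ)).trace := by
    rw [Matrix.mul_assoc, Matrix.mul_assoc, trace_mul_comm, Matrix.mul_assoc]
  rw [PsiMat, add_mul, trace_add, hcycle, trace_fromBlocks_zero₁₂_zero₂₁_mul,
    trace_eq_trace_toBlocks₁₁_add_trace_toBlocks₂₂ A]
  simp only [Complex.coe_smul, Algebra.smul_mul_assoc, one_mul, trace_smul, Complex.real_smul,
    toBlocks₂₂, trace_fin_one, mul_apply, Finset.univ_unique, Fin.default_eq_zero, of_apply,
    Finset.sum_singleton]
  ring

theorem trace_mul_appendCol_eq_of_PsiMat_mul_eq_zero {n : ℕ} (Q : Matrix (Fin n) (Fin n) ℂ)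
    (hbar : Fin n → ℂ) (l σ2 r : ℝ) (A : Matrix (Fin n ⊕ Fin 1) (Fin n ⊕ Fin 1) ℂ)
    (hΨA : PsiMat Q hbar l σ2 r * A = 0) :
    (Q * (appendCol hbar * A * (appendCol hbar)ᴴ)).trace =
      σ2 * A (.inr 0) (.inr 0) + l * ((1 + r ^ 2) * A (.inr 0) (.inr 0) - A.trace) := by
  have h := trace_PsiMat_mul Q hbar l σ2 r A
  rw [hΨA, trace_zero] at h
  linear_combination -h

theorem kkt_trace_identity_active_general (n : ℕ) (Q : Matrix (Fin n) (Fin n) ℂ)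
    (hbar : Fin n → ℂ) (l σ2 r : ℝ)
    (A : Matrix (Fin n ⊕ Fin 1) (Fin n ⊕ Fin 1) ℂ)
    (hΨA : PsiMat Q hbar l σ2 r * A = 0)
    (hcs : l = 0 ∨ A.trace.re = (1 + r ^ 2) * (A (Sum.inr 0) (Sum.inr 0)).re) :
    ((Q * (appendCol hbar * A * (appendCol hbar)ᴴ)).trace).re
      = σ2 * (A (Sum.inr 0) (Sum.inr 0)).re := by
  have hslack : l * ((1 + r ^ 2) * (A (.inr 0) (.inr 0)).re - A.trace.re) = 0 := by
    rcases hcs with hl | hactive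
    · rw [hl, zero_mul]
    · rw [hactive, sub_self, mul_zero]
  have hcoeff : 1 + (r : ℂ) ^ 2 = ((1 + r ^ 2 : ℝ) : ℂ) := by push_cast; ring
  rw [trace_mul_appendCol_eq_of_PsiMat_mul_eq_zero Q hbar l σ2 r A hΨA]
  simp only [Complex.add_re, Complex.re_ofReal_mul, Complex.sub_re, hcoeff]
  linarith

/-- Under complementary slackness (`λ = 0` or an active trace constraint
`tr(A) = (1+r²)[A]_{n+1,n+1}`) the trace identity simplifies to
`tr(Q [I,h̄] A [I,h̄]ᴴ) = σ² [A]_{n+1,n+1}`. -/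
theorem kkt_trace_identity_active (n : ℕ) (Q : Matrix (Fin n) (Fin n) ℂ)
    (hQ : Q.IsHermitian) (hbar : Fin n → ℂ) (l σ2 r : ℝ) (hl : 0 ≤ l)
    (A : Matrix (Fin n ⊕ Fin 1) (Fin n ⊕ Fin 1) ℂ)
    (hΨ : (PsiMat Q hbar l σ2 r).PosSemidef)
    (hA : A.PosSemidef)
    (hΨA : PsiMat Q hbar l σ2 r * A = 0)
    (hcs : l = 0 ∨ A.trace.re = (1 + r ^ 2) * (A (Sum.inr 0) (Sum.inr 0)).re) :
    ((Q * (appendCol hbar * A * (appendCol hbar)ᴴ)).trace).re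
      = σ2 * (A (Sum.inr 0) (Sum.inr 0)).re :=
  kkt_trace_identity_active_general n Q hbar l σ2 r A hΨA hcs
end
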